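/- Let λ₁, λ₂, u, v ∈ ℤ with gcd(u,v) = 1 and v dividing λ₁ − λ₂; let Λ = diag(λ₁, λ₂), M = [[1, u], [0, v]], and A = M·Λ·M⁻¹, and assume A ∈ M_2(ℤ) is non-singular with P'(A) ≠ ∅. Assume every prime dividing λ₂ also divides λ₁. Then a matrix T ∈ M_2(ℚ) satisfies T·x ∈ G_A for all x ∈ G_A if and only if T is upper triangular, every entry of T lies in ℤ[1/det A], and the (2,2) entry z of T satisfies λ₂^k·z ∈ ℤ for some k ∈ ℕ. -/

import Mathlib

open Matrix Polynomial

noncomputable section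

/-- The matrix `A` viewed over `ℚ`. -/
def Aq {n : ℕ} (A : Matrix (Fin n) (Fin n) ℤ) : Matrix (Fin n) (Fin n) ℚ :=
  A.map (Int.cast : ℤ → ℚ)

/-- The group `G_A = {A^k x : x ∈ ℤ^n, k ∈ ℤ} ⊆ ℚ^n`. -/
def GA {n : ℕ} (A : Matrix (Fin n) (Fin n) ℤ) : Set (Fin n → ℚ) :=
  {v | ∃ (k : ℤ) (x : Fin n → ℤ), v = (Aq A ^ k) *ᵥ fun i => ((x i : ℚ))}

/-- The ring `ℤ[1 / det A] ⊆ ℚ`. -/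
def Rdet {n : ℕ} (A : Matrix (Fin n) (Fin n) ℤ) : Set ℚ :=
  {r | ∃ (a : ℤ) (l : ℕ), r = (a : ℚ) / ((A.det : ℚ)) ^ l}

/-- `P'(A)`: primes dividing `det A` such that `h_A ≢ x^n (mod p)`. -/
def Pbad {n : ℕ} (A : Matrix (Fin n) (Fin n) ℤ) : Set ℕ :=
  {p | p.Prime ∧ (p : ℤ) ∣ A.det ∧ A.charpoly.map (Int.castRingHom (ZMod p)) ≠ X ^ n}

/-- The matrix `M = [[1, u], [0, v]]` over `ℚ`. -/
def M2q (u v : ℤ) : Matrix (Fin 2) (Fin 2) ℚ := !![1, (u : ℚ); 0, (v : ℚ)]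

/- ### Auxiliary material -/

lemma exists_dvd_pow_aux (a : ℤ) : ∀ n : ℕ, ∀ b : ℤ, b.natAbs = n → b ≠ 0 →
    (∀ p : ℤ, Prime p → p ∣ b → p ∣ a) → ∃ N : ℕ, b ∣ a ^ N := by
  intro n
  induction n using Nat.strong_induction_on with
  | _ n ih =>
    intro b hn hb h
    by_cases h1 : b.natAbs = 1
    · refine ⟨0, ?_⟩
      rw [pow_zero]
      rcases Int.natAbs_eq_iff.mp h1 with rfl | rfl <;> simp
    · obtain ⟨p, pp, b', rfl⟩ := Int.exists_prime_and_dvd h1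
      have hb' : b' ≠ 0 := fun h0 => hb (by simp [h0])
      have hp2 : 2 ≤ p.natAbs := (Int.prime_iff_natAbs_prime.mp pp).two_le
      have hlt : b'.natAbs < n := by
        rw [← hn, Int.natAbs_mul]
        have h1' : 1 ≤ b'.natAbs := Nat.one_le_iff_ne_zero.mpr (Int.natAbs_ne_zero.mpr hb')
        nlinarith
      obtain ⟨N, hN⟩ := ih _ hlt b' rfl hb' (fun q hq hqd => h q hq (hqd.mul_left p))
      refine ⟨N + 1, ?_⟩
      rw [pow_succ, mul_comm (a ^ N) a]
      exact mul_dvd_mul (h p pp (Dvd.intro b' rfl)) hN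

lemma exists_dvd_pow_of_primes (a b : ℤ) (hb : b ≠ 0)
    (h : ∀ p : ℤ, Prime p → p ∣ b → p ∣ a) : ∃ N : ℕ, b ∣ a ^ N :=
  exists_dvd_pow_aux a b.natAbs b rfl hb h

/-- off-diagonal entries of powers of `!![a, c; 0, d]`. -/
def cseq (a d c : ℤ) : ℕ → ℤ
  | 0 => 0
  | m + 1 => a * cseq a d c m + c * d ^ m

lemma cseq_zero (a d c : ℤ) : cseq a d c 0 = 0 := rfl

lemma cseq_succ (a d c : ℤ) (m : ℕ) :
    cseq a d c (m + 1) = a * cseq a d c m + c * d ^ m := rfl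

lemma cseq_succ' (a d c : ℤ) (m : ℕ) :
    cseq a d c (m + 1) = d * cseq a d c m + c * a ^ m := by
  induction m with
  | zero => simp [cseq_succ, cseq_zero]
  | succ m ih =>
    conv_lhs => rw [cseq_succ, ih]
    conv_rhs => rw [cseq_succ]
    ring

lemma cseq_dvd (a d c : ℤ) (N : ℕ) (hd : d ∣ a ^ N) :
    ∀ K m : ℕ, (N + 1) * K ≤ m → d ^ K ∣ cseq a d c m := by
  intro K
  induction K with
  | zero => intro m _; simp
  | succ K ih =>
    intro m hm
    have hm1 : 1 ≤ m := by nlinarith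
    obtain ⟨m', rfl⟩ : ∃ m', m = m' + 1 := ⟨m - 1, by omega⟩
    rw [cseq_succ']
    have h1 : d ^ (K + 1) ∣ d * cseq a d c m' := by
      rw [pow_succ, mul_comm]
      exact mul_dvd_mul_left d (ih m' (by nlinarith))
    have h2 : d ^ (K + 1) ∣ c * a ^ m' := by
      have hNK : N * (K + 1) ≤ m' := by nlinarith
      have : d ^ (K + 1) ∣ a ^ (N * (K + 1)) := by
        rw [pow_mul]
        exact pow_dvd_pow_of_dvd hd _
      exact Dvd.dvd.mul_left (this.trans (pow_dvd_pow a hNK)) c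
    exact dvd_add h1 h2

lemma tri_pow (a d c : ℤ) (m : ℕ) :
    (!![(a : ℚ), (c : ℚ); 0, (d : ℚ)]) ^ m
      = !![(a : ℚ) ^ m, ((cseq a d c m : ℤ) : ℚ); 0, (d : ℚ) ^ m] := by
  induction m with
  | zero => simp [cseq_zero, Matrix.one_fin_two]
  | succ m ih =>
    rw [pow_succ, ih, Matrix.mul_fin_two, cseq_succ']
    push_cast
    ext i j
    fin_cases i <;> fin_cases j <;> simp <;> ring

lemma Aq_eq_mapMatrix {n : ℕ} (A : Matrix (Fin n) (Fin n) ℤ) :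
    Aq A = (Int.castRingHom ℚ).mapMatrix A := rfl

lemma Aq_pow {n : ℕ} (A : Matrix (Fin n) (Fin n) ℤ) (m : ℕ) :
    Aq A ^ m = Aq (A ^ m) := by
  rw [Aq_eq_mapMatrix, Aq_eq_mapMatrix, ← map_pow]

lemma Aq_det {n : ℕ} (A : Matrix (Fin n) (Fin n) ℤ) : (Aq A).det = (A.det : ℚ) := by
  rw [Aq_eq_mapMatrix, ← RingHom.map_det]; rfl

lemma cast_mulVec {n : ℕ} (A : Matrix (Fin n) (Fin n) ℤ) (x : Fin n → ℤ) :
    (Aq A) *ᵥ (fun i => ((x i : ℚ))) = fun i => (((A *ᵥ x) i : ℚ)) := by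
  funext i
  simp only [Aq, Matrix.mulVec, dotProduct, Matrix.map_apply]
  push_cast
  rfl

lemma mem_GA_iff {n : ℕ} (A : Matrix (Fin n) (Fin n) ℤ) (hA : A.det ≠ 0) (w : Fin n → ℚ) :
    w ∈ GA A ↔ ∃ (m : ℕ) (x : Fin n → ℤ), (Aq A) ^ m *ᵥ w = fun i => ((x i : ℚ)) := by
  have hdet : ∀ m : ℕ, IsUnit ((Aq A ^ m).det) := by
    intro m
    rw [Matrix.det_pow, Aq_det]
    exact isUnit_iff_ne_zero.mpr (pow_ne_zero _ (by exact_mod_cast hA))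
  constructor
  · rintro ⟨k, x, rfl⟩
    rcases le_or_gt 0 k with hk | hk
    · lift k to ℕ using hk
      refine ⟨0, A ^ k *ᵥ x, ?_⟩
      rw [pow_zero, Matrix.one_mulVec, zpow_natCast, Aq_pow, cast_mulVec]
    · obtain ⟨m, rfl⟩ : ∃ m : ℕ, k = -(m : ℤ) := ⟨k.natAbs, by omega⟩
      refine ⟨m, x, ?_⟩
      rw [Matrix.zpow_neg_natCast, Matrix.mulVec_mulVec, Matrix.mul_nonsing_inv _ (hdet m),
        Matrix.one_mulVec]
  · rintro ⟨m, x, hx⟩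
    refine ⟨-(m : ℤ), x, ?_⟩
    rw [Matrix.zpow_neg_natCast, ← hx, Matrix.mulVec_mulVec,
      Matrix.nonsing_inv_mul _ (hdet m), Matrix.one_mulVec]

/-- case (c) of the 2-dimensional reducible situation. -/
theorem stmt5 (lam1 lam2 u v : ℤ) (hcop : Int.gcd u v = 1) (hdvd : v ∣ lam1 - lam2)
    (A : Matrix (Fin 2) (Fin 2) ℤ) (hA : A.det ≠ 0)
    (hAform : Aq A = M2q u v * !![(lam1 : ℚ), 0; 0, (lam2 : ℚ)] * (M2q u v)⁻¹)
    (hP' : (Pbad A).Nonempty)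
    (hc : ∀ p : ℕ, p.Prime → (p : ℤ) ∣ lam2 → (p : ℤ) ∣ lam1)
    (T : Matrix (Fin 2) (Fin 2) ℚ) :
    (∀ w ∈ GA A, T *ᵥ w ∈ GA A) ↔
      (T 1 0 = 0 ∧ (∀ i j, T i j ∈ Rdet A) ∧
        ∃ (k : ℕ) (m : ℤ), (lam2 : ℚ) ^ k * T 1 1 = (m : ℚ)) := by
  -- v ≠ 0
  have hv : v ≠ 0 := by
    intro hv0
    subst hv0
    have hMdet : (M2q u 0).det = 0 := by
      simp [M2q, Matrix.det_fin_two_of]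
    have : (M2q u 0)⁻¹ = 0 := Matrix.nonsing_inv_apply_not_isUnit _ (by simp [hMdet])
    rw [this, Matrix.mul_zero] at hAform
    have : (A.det : ℚ) = 0 := by rw [← Aq_det, hAform]; simp
    exact hA (by exact_mod_cast this)
  have hvQ : (v : ℚ) ≠ 0 := Int.cast_ne_zero.mpr hv
  obtain ⟨t, ht⟩ := hdvd
  set c : ℤ := -(u * t) with hc_def
  -- the explicit form of A
  have hMinv : (M2q u v)⁻¹ = !![1, -(u : ℚ) / v; 0, ((v : ℚ))⁻¹] := by
    apply Matrix.inv_eq_right_inv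
    rw [M2q, Matrix.mul_fin_two]
    ext i j
    fin_cases i <;> fin_cases j <;> simp <;> field_simp <;> ring
  have hB : Aq A = !![(lam1 : ℚ), (c : ℚ); 0, (lam2 : ℚ)] := by
    rw [hAform, hMinv, M2q, Matrix.mul_fin_two, Matrix.mul_fin_two]
    have htQ : (lam1 : ℚ) - lam2 = v * t := by exact_mod_cast congrArg (Int.cast : ℤ → ℚ) ht
    ext i j
    fin_cases i <;> fin_cases j <;> simp <;>
      (field_simp) <;> (try simp only [hc_def]) <;> push_cast <;>
      linear_combination (-(u : ℚ)) * htQ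
  have hAeq : A = !![lam1, c; 0, lam2] := by
    ext i j
    have h := congrFun (congrFun hB i) j
    simp only [Aq, Matrix.map_apply] at h
    fin_cases i <;> fin_cases j <;> simp at h ⊢ <;> exact_mod_cast h
  subst hAeq
  have hdetA : Matrix.det !![lam1, c; 0, lam2] = lam1 * lam2 := by
    simp [Matrix.det_fin_two_of]
  have h1 : lam1 ≠ 0 := by rintro rfl; rw [hdetA] at hA; simp at hA
  have h2 : lam2 ≠ 0 := by rintro rfl; rw [hdetA] at hA; simp at hA
  have h1Q : (lam1 : ℚ) ≠ 0 := Int.cast_ne_zero.mpr h1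
  have h2Q : (lam2 : ℚ) ≠ 0 := Int.cast_ne_zero.mpr h2
  have hdetQ : ((Matrix.det !![lam1, c; 0, lam2] : ℤ) : ℚ) ≠ 0 := Int.cast_ne_zero.mpr hA
  have hpow : ∀ m : ℕ, (Aq !![lam1, c; 0, lam2]) ^ m
      = !![(lam1 : ℚ) ^ m, ((cseq lam1 lam2 c m : ℤ) : ℚ); 0, (lam2 : ℚ) ^ m] := by
    intro m; rw [hB, tri_pow]
  -- the prime p
  obtain ⟨p, hp, hpdet, hpbad⟩ := hP'
  have hchar : (!![lam1, c; 0, lam2] : Matrix (Fin 2) (Fin 2) ℤ).charpoly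
      = (X - C lam1) * (X - C lam2) := by
    rw [Matrix.charpoly, Matrix.det_fin_two, Matrix.charmatrix_apply_eq,
      Matrix.charmatrix_apply_eq, Matrix.charmatrix_apply_ne _ _ _ (by decide),
      Matrix.charmatrix_apply_ne _ _ _ (by decide)]
    simp
  have hIntP : Prime (p : ℤ) := Nat.prime_iff_prime_int.mp hp
  have hnot : ¬((p : ℤ) ∣ lam1 ∧ (p : ℤ) ∣ lam2) := by
    rintro ⟨d1, d2⟩
    apply hpbad
    rw [hchar, Polynomial.map_mul, Polynomial.map_sub, Polynomial.map_sub, map_X, map_C, map_C]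
    have e1 : (Int.castRingHom (ZMod p)) lam1 = 0 :=
      (ZMod.intCast_zmod_eq_zero_iff_dvd lam1 p).mpr d1
    have e2 : (Int.castRingHom (ZMod p)) lam2 = 0 :=
      (ZMod.intCast_zmod_eq_zero_iff_dvd lam2 p).mpr d2
    rw [e1, e2]
    simp [sq]
  have hpl : (p : ℤ) ∣ lam1 ∧ ¬ (p : ℤ) ∣ lam2 := by
    have hd2 : ¬ (p : ℤ) ∣ lam2 := fun hd => hnot ⟨hc p hp hd, hd⟩
    refine ⟨?_, hd2⟩
    rw [hdetA] at hpdet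
    rcases hIntP.2.2 _ _ hpdet with h | h
    · exact h
    · exact absurd h hd2
  -- N with lam2 ∣ lam1 ^ N
  obtain ⟨N, hN⟩ : ∃ N : ℕ, lam2 ∣ lam1 ^ N := by
    apply exists_dvd_pow_of_primes lam1 lam2 h2
    intro q hq hqd
    have hq' : q.natAbs.Prime := Int.prime_iff_natAbs_prime.mp hq
    have := hc q.natAbs hq' ((Int.natAbs_dvd.mpr hqd : (q.natAbs : ℤ) ∣ lam2))
    exact Int.natAbs_dvd.mp this
  constructor
  · intro hT
    have hmemZ : ∀ xv : Fin 2 → ℤ, (fun i' => ((xv i' : ℚ))) ∈ GA !![lam1, c; 0, lam2] :=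
      fun xv => ⟨0, xv, by rw [zpow_zero, Matrix.one_mulVec]⟩
    have hmemR : ∀ (r : ℚ) (l : ℕ) (x0 : ℤ),
        ((!![lam1, c; 0, lam2].det : ℤ) : ℚ) ^ l * r = (x0 : ℚ) →
        r ∈ Rdet !![lam1, c; 0, lam2] := by
      intro r l x0 hrx
      refine ⟨x0, l, ?_⟩
      rw [← hrx]
      field_simp
    refine ⟨?_, ?_, ?_⟩
    · -- T 1 0 = 0
      have key : ∀ k : ℕ, ∃ (m : ℕ) (y : ℤ),
          (lam2 : ℚ) ^ m * T 1 0 = (y : ℚ) * (lam1 : ℚ) ^ k := by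
        intro k
        have hwk : (![((lam1 : ℚ) ^ k)⁻¹, 0] : Fin 2 → ℚ) ∈ GA !![lam1, c; 0, lam2] := by
          rw [mem_GA_iff _ hA]
          refine ⟨k, ![1, 0], ?_⟩
          rw [hpow k]
          funext i
          fin_cases i <;>
            simp [Matrix.mulVec, dotProduct, Fin.sum_univ_two] <;> field_simp
        obtain ⟨m, x, hx⟩ := (mem_GA_iff _ hA _).mp (hT _ hwk)
        have h1 := congrFun hx 1
        rw [hpow m] at h1
        simp [Matrix.mulVec, dotProduct, Fin.sum_univ_two] at h1
        refine ⟨m, x 1, ?_⟩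
        field_simp at h1 ⊢
        linear_combination h1
      by_contra hq
      have hqnum : (T 1 0).num ≠ 0 := Rat.num_ne_zero.mpr hq
      set k := (T 1 0).num.natAbs + 1 with hk_def
      obtain ⟨m, y, hmy⟩ := key k
      have hden : ((T 1 0).den : ℚ) ≠ 0 := Nat.cast_ne_zero.mpr (T 1 0).den_nz
      have hint : lam2 ^ m * (T 1 0).num = y * lam1 ^ k * ((T 1 0).den : ℤ) := by
        have hqq : T 1 0 * ((T 1 0).den : ℚ) = ((T 1 0).num : ℚ) :=
          Rat.mul_den_eq_num _
        have h' := congrArg (fun r : ℚ => r * ((T 1 0).den : ℚ)) hmy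
        simp only [mul_assoc, hqq] at h'
        have h'' : (lam2 : ℚ) ^ m * ((T 1 0).num : ℚ)
            = (y : ℚ) * ((lam1 : ℚ) ^ k * ((T 1 0).den : ℚ)) := h'
        rw [← mul_assoc] at h''
        exact_mod_cast h''
      have hpk : (p : ℤ) ^ k ∣ lam2 ^ m * (T 1 0).num := by
        rw [hint]
        exact ((pow_dvd_pow_of_dvd hpl.1 k).mul_left y).mul_right _
      have hpnum : (p : ℤ) ^ k ∣ (T 1 0).num :=
        hIntP.pow_dvd_of_dvd_mul_left k
          (fun hd => hpl.2 (hIntP.dvd_of_dvd_pow hd)) hpk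
      have hle : p ^ k ≤ (T 1 0).num.natAbs := by
        apply Nat.le_of_dvd (Nat.pos_of_ne_zero (Int.natAbs_ne_zero.mpr hqnum))
        have hd := Int.natAbs_dvd_natAbs.mpr hpnum
        simpa [Int.natAbs_pow] using hd
      have hlt : (T 1 0).num.natAbs < 2 ^ k := by
        calc (T 1 0).num.natAbs < k := by omega
        _ < 2 ^ k := Nat.lt_two_pow_self
      have h2p : 2 ^ k ≤ p ^ k := Nat.pow_le_pow_left hp.two_le k
      omega
    · -- entries in Rdet
      have hcol : ∀ y : Fin 2 → ℚ, y ∈ GA !![lam1, c; 0, lam2] →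
          y 0 ∈ Rdet !![lam1, c; 0, lam2] ∧ y 1 ∈ Rdet !![lam1, c; 0, lam2] := by
        intro y hy
        obtain ⟨m, x, hx⟩ := (mem_GA_iff _ hA _).mp hy
        have h0 := congrFun hx 0
        have h1 := congrFun hx 1
        rw [hpow m] at h0 h1
        simp [Matrix.mulVec, dotProduct, Fin.sum_univ_two] at h0 h1
        constructor
        · apply hmemR _ m (x 0 * lam2 ^ m - cseq lam1 lam2 c m * x 1)
          rw [hdetA]
          push_cast
          linear_combination ((lam2 : ℚ) ^ m) * h0 - ((cseq lam1 lam2 c m : ℤ) : ℚ) * h1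
        · apply hmemR _ m (x 1 * lam1 ^ m)
          rw [hdetA]
          push_cast
          linear_combination ((lam1 : ℚ) ^ m) * h1
      intro i j
      have hsingle : (fun i' => (((Pi.single j 1 : Fin 2 → ℤ)) i' : ℚ))
          = Pi.single j (1 : ℚ) := by
        funext i'
        simp [Pi.single_apply, apply_ite (Int.cast : ℤ → ℚ)]
      have hTij : T i j = (T *ᵥ fun i' => (((Pi.single j 1 : Fin 2 → ℤ)) i' : ℚ)) i := by
        rw [hsingle, Matrix.mulVec_single]
        simp
      rw [hTij]
      have hy := hcol _ (hT _ (hmemZ (Pi.single j 1)))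
      fin_cases i
      exacts [hy.1, hy.2]
    · -- the (2,2)-entry
      obtain ⟨m, x, hx⟩ := (mem_GA_iff _ hA _).mp (hT _ (hmemZ ![0, 1]))
      have h1 := congrFun hx 1
      rw [hpow m] at h1
      simp [Matrix.mulVec, dotProduct, Fin.sum_univ_two] at h1
      exact ⟨m, x 1, by linear_combination h1⟩
  · rintro ⟨h10, hR, k₀, z₀, hz⟩
    intro w hw
    have hconv : ∀ r : ℚ, r ∈ Rdet !![lam1, c; 0, lam2] →
        ∃ (l : ℕ) (r₀ : ℤ), (lam1 : ℚ) ^ l * r = (r₀ : ℚ) := by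
      rintro r ⟨a₀, l, hrl⟩
      obtain ⟨e, he⟩ : (lam2 : ℤ) ^ l ∣ lam1 ^ (N * l) := by
        rw [pow_mul]; exact pow_dvd_pow_of_dvd hN l
      refine ⟨l + N * l, a₀ * e, ?_⟩
      have heQ : (lam1 : ℚ) ^ (N * l) = (lam2 : ℚ) ^ l * (e : ℚ) := by exact_mod_cast he
      rw [hrl, hdetA]
      push_cast
      rw [pow_add]
      have hl2l : ((lam1 : ℚ) * (lam2 : ℚ)) ^ l ≠ 0 := pow_ne_zero _ (by
        exact mul_ne_zero h1Q h2Q)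
      field_simp
      linear_combination ((lam1 : ℚ) ^ l * (a₀ : ℚ)) * heQ
    obtain ⟨lr, r₀, hr⟩ := hconv _ (hR 0 0)
    obtain ⟨ls, s₀, hs⟩ := hconv _ (hR 0 1)
    rw [mem_GA_iff _ hA] at hw ⊢
    obtain ⟨k, x, hx⟩ := hw
    set K := k + k₀ with hK
    set m := lr + ls + k₀ + (N + 1) * K + N * k + k with hm_def
    set E00 : ℤ := lam1 ^ (m - k - lr) * r₀ with hE00
    set E11 : ℤ := lam2 ^ (m - k - k₀) * z₀ with hE11
    have hdk_a1 : (lam2 : ℤ) ^ k ∣ lam1 ^ (m - ls) := by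
      have : (lam2 : ℤ) ^ k ∣ lam1 ^ (N * k) := by
        rw [pow_mul]; exact pow_dvd_pow_of_dvd hN k
      exact this.trans (pow_dvd_pow _ (by omega))
    have hdk_a2 : (lam2 : ℤ) ^ k ∣ lam1 ^ (m - k - lr) := by
      have : (lam2 : ℤ) ^ k ∣ lam1 ^ (N * k) := by
        rw [pow_mul]; exact pow_dvd_pow_of_dvd hN k
      exact this.trans (pow_dvd_pow _ (by omega))
    have hdvdI : (lam2 : ℤ) ^ K ∣ lam1 ^ (m - ls) * s₀ * lam2 ^ k₀
        + cseq lam1 lam2 c m * z₀ - E00 * cseq lam1 lam2 c k * lam2 ^ k₀ := by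
      refine dvd_sub (dvd_add ?_ ?_) ?_
      · rw [hK, pow_add]
        exact mul_dvd_mul (hdk_a1.mul_right s₀) dvd_rfl
      · exact (cseq_dvd lam1 lam2 c N hN K m (by rw [hm_def]; ring_nf; omega)).mul_right z₀
      · rw [hK, pow_add, hE00]
        exact mul_dvd_mul (((hdk_a2.mul_right r₀).mul_right _)) dvd_rfl
    obtain ⟨E01, hE01⟩ := hdvdI
    refine ⟨m, !![E00, E01; (0 : ℤ), E11] *ᵥ x, ?_⟩
    have hAqE : Aq !![E00, E01; (0 : ℤ), E11] = !![(E00 : ℚ), (E01 : ℚ); 0, (E11 : ℚ)] := by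
      ext i j
      fin_cases i <;> fin_cases j <;> simp [Aq]
    -- the three scalar identities
    have e1 : (lam1 : ℚ) ^ m * T 0 0 = (E00 : ℚ) * (lam1 : ℚ) ^ k := by
      have sp : (lam1 : ℚ) ^ m
          = (lam1 : ℚ) ^ (m - k - lr) * (lam1 : ℚ) ^ lr * (lam1 : ℚ) ^ k := by
        rw [← pow_add, ← pow_add]; congr 1; omega
      rw [hE00]
      push_cast
      linear_combination (T 0 0) * sp
        + ((lam1 : ℚ) ^ (m - k - lr) * (lam1 : ℚ) ^ k) * hr
    have e2 : (lam2 : ℚ) ^ m * T 1 1 = (E11 : ℚ) * (lam2 : ℚ) ^ k := by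
      have sp : (lam2 : ℚ) ^ m
          = (lam2 : ℚ) ^ (m - k - k₀) * (lam2 : ℚ) ^ k₀ * (lam2 : ℚ) ^ k := by
        rw [← pow_add, ← pow_add]; congr 1; omega
      rw [hE11]
      push_cast
      linear_combination (T 1 1) * sp
        + ((lam2 : ℚ) ^ (m - k - k₀) * (lam2 : ℚ) ^ k) * hz
    have e3 : (lam1 : ℚ) ^ m * T 0 1 + ((cseq lam1 lam2 c m : ℤ) : ℚ) * T 1 1
        = (E00 : ℚ) * ((cseq lam1 lam2 c k : ℤ) : ℚ) + (E01 : ℚ) * (lam2 : ℚ) ^ k := by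
      have hE01Q : (lam1 : ℚ) ^ (m - ls) * (s₀ : ℚ) * (lam2 : ℚ) ^ k₀
          + ((cseq lam1 lam2 c m : ℤ) : ℚ) * (z₀ : ℚ)
          - (E00 : ℚ) * ((cseq lam1 lam2 c k : ℤ) : ℚ) * (lam2 : ℚ) ^ k₀
          = (lam2 : ℚ) ^ K * (E01 : ℚ) := by exact_mod_cast hE01
      have sp1 : (lam1 : ℚ) ^ m = (lam1 : ℚ) ^ (m - ls) * (lam1 : ℚ) ^ ls := by
        rw [← pow_add]; congr 1; omega
      have sp2 : (lam2 : ℚ) ^ K = (lam2 : ℚ) ^ k * (lam2 : ℚ) ^ k₀ := by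
        rw [hK, pow_add]
      apply mul_left_cancel₀ (pow_ne_zero k₀ h2Q)
      linear_combination ((cseq lam1 lam2 c m : ℤ) : ℚ) * hz
        + ((lam1 : ℚ) ^ (m - ls) * (lam2 : ℚ) ^ k₀) * hs + hE01Q
        + ((lam2 : ℚ) ^ k₀ * T 0 1) * sp1 + (E01 : ℚ) * sp2
    have hT_eta : T = !![T 0 0, T 0 1; T 1 0, T 1 1] := by
      ext i j
      fin_cases i <;> fin_cases j <;> rfl
    have hkey : (Aq !![lam1, c; 0, lam2]) ^ m * T
        = Aq !![E00, E01; (0 : ℤ), E11] * (Aq !![lam1, c; 0, lam2]) ^ k := by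
      rw [hpow, hpow, hAqE]
      conv_lhs => rw [hT_eta]
      rw [Matrix.mul_fin_two, Matrix.mul_fin_two]
      ext i j
      fin_cases i <;> fin_cases j <;> simp [h10]
      · linear_combination e1
      · linear_combination e3
      · linear_combination e2
    rw [Matrix.mulVec_mulVec, hkey, ← Matrix.mulVec_mulVec, hx, cast_mulVec]
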